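/- Unbiasedness with effective learning rate: under on-policy sampling of G > 1 i.i.d. outputs from π_φ, with effective reward r̃_φ(o) = r(o) + (α/N)log(π_θ(o)/π_φ(o)) and advantages Ã_i = r̃_φ(o_i) − mean_j r̃_φ(o_j), the scaled gradient estimate (G/(G−1)) · E[(1/G)Σ_i Ã_i ∇_φ log π_φ(o_i)] equals ∇_φ E_{o∼π_φ}[r̃_φ(o)] (the true policy gradient of J(φ) = E_{o∼π_φ}[r̃_φ(o)]). -/

import Mathlib

/-!
Under the law of `G` i.i.d. draws from `π_φ`, `E[f(o_i) • s(o_j)]` is `E[f • s]` for `i = j` and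
`E f • E s` for `i ≠ j`. For the score `s = ∇ log π_φ` one has `E s = ∇ ∑ π_φ = ∇ 1 = 0`, so
subtracting the sample mean only costs the factor `(G - 1) / G`, which the prefactor undoes. What
remains, `E[r̃ • ∇ log π_φ] = ∑ r̃ • ∇π_φ`, is `∇J`: the other product-rule term,
`E[∇r̃] = -(α / N) • E s`, vanishes as well.
-/

open Finset

section Marginals

variable {ι O R M : Type*} [Fintype ι] [DecidableEq ι] [Fintype O] [CommSemiring R]
  [AddCommMonoid M] [Module R M] {p : O → R}

theorem Fintype.sum_prod_pi_eq_one (hp : ∑ o, p o = 1) :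
    ∑ ω : ι → O, ∏ k, p (ω k) = 1 := by
  rw [← Fintype.prod_sum, hp, prod_const_one]

theorem Fintype.sum_prod_smul_eq_sum_splitAt (i : ι) (F : (ι → O) → M) :
    ∑ ω : ι → O, (∏ k, p (ω k)) • F ω
      = ∑ a, p a • ∑ η : {k // k ≠ i} → O,
          (∏ k, p (η k)) • F ((Equiv.funSplitAt i O).symm (a, η)) := by
  rw [← (Equiv.funSplitAt i O).symm.sum_comp, Fintype.sum_prod_type]
  refine Fintype.sum_congr _ _ fun a => ?_
  rw [smul_sum]
  refine Fintype.sum_congr _ _ fun η => ?_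
  have hi : (Equiv.funSplitAt i O).symm (a, η) i = a := by simp [Equiv.funSplitAt]
  have hne (k : {k // k ≠ i}) : (Equiv.funSplitAt i O).symm (a, η) k = η k := by
    simp [Equiv.funSplitAt, k.2]
  rw [Fintype.prod_eq_mul_prod_subtype_ne _ i, mul_smul, hi]
  simp only [hne]

theorem Fintype.sum_prod_smul_apply (hp : ∑ o, p o = 1) (i : ι) (F : O → M) :
    ∑ ω : ι → O, (∏ k, p (ω k)) • F (ω i) = ∑ a, p a • F a := by
  rw [Fintype.sum_prod_smul_eq_sum_splitAt i]
  simp [Equiv.funSplitAt, ← sum_smul, Fintype.sum_prod_pi_eq_one hp]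

theorem Fintype.sum_prod_smul_apply_smul_apply (hp : ∑ o, p o = 1) {i j : ι} (hij : j ≠ i)
    (f : O → R) (s : O → M) :
    ∑ ω : ι → O, (∏ k, p (ω k)) • f (ω j) • s (ω i)
      = (∑ a, p a * f a) • ∑ a, p a • s a := by
  rw [Fintype.sum_prod_smul_eq_sum_splitAt i]
  have hinner (a : O) : ∑ η : {k // k ≠ i} → O, (∏ k, p (η k)) • f (η ⟨j, hij⟩) • s a
      = (∑ b, p b * f b) • s a := by
    have hf := Fintype.sum_prod_smul_apply hp (⟨j, hij⟩ : {k // k ≠ i}) f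
    simp only [smul_eq_mul] at hf
    simp only [← hf, sum_smul, smul_smul]
  simp only [Equiv.funSplitAt_symm_apply, hij, dite_false, dite_true, hinner, smul_sum,
    smul_comm (p _)]

end Marginals

section Centered

variable {ι O 𝕜 M : Type*} [Fintype ι] [DecidableEq ι] [Fintype O] [Field 𝕜] [AddCommGroup M]
  [Module 𝕜 M] {p : O → 𝕜}

/-- At `Fintype.card ι = 0` both sides vanish, the right one because `x / 0 = 0`. -/
theorem Fintype.sum_prod_smul_centered (hp : ∑ o, p o = 1) (f : O → 𝕜) (s : O → M)
    (hs : ∑ o, p o • s o = 0) :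
    ∑ ω : ι → O, (∏ k, p (ω k)) •
        ((Fintype.card ι : 𝕜)⁻¹ • ∑ i, (f (ω i) - (Fintype.card ι : 𝕜)⁻¹ * ∑ j, f (ω j)) • s (ω i))
      = (((Fintype.card ι : 𝕜) - 1) / Fintype.card ι) • ∑ o, p o • f o • s o := by
  set c := (Fintype.card ι : 𝕜)⁻¹
  set A := ∑ o, p o • f o • s o
  have hdiag (i : ι) : ∑ ω : ι → O, (∏ k, p (ω k)) • f (ω i) • s (ω i) = A :=
    Fintype.sum_prod_smul_apply hp i fun o => f o • s o
  have hcross (i : ι) : ∑ j, ∑ ω : ι → O, (∏ k, p (ω k)) • f (ω j) • s (ω i) = A := by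
    rw [Finset.sum_eq_single i (fun j _ hji => by
      rw [Fintype.sum_prod_smul_apply_smul_apply hp hji, hs, smul_zero]) (by simp)]
    exact hdiag i
  calc _ = c • ∑ i, (∑ ω : ι → O, (∏ k, p (ω k)) • f (ω i) • s (ω i)
          - c • ∑ j, ∑ ω : ι → O, (∏ k, p (ω k)) • f (ω j) • s (ω i)) := by
        simp only [sub_smul, mul_smul, smul_sub, sum_sub_distrib, smul_sum, sum_smul]
        rw [sum_comm]
        congr 1
        · simp only [smul_comm c (_ : 𝕜) (_ : M)]
        · rw [sum_comm]
          refine Fintype.sum_congr _ _ fun i => ?_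
          rw [sum_comm]
          simp only [smul_comm c (_ : 𝕜) (_ : M)]
    _ = c • ∑ _i : ι, (A - c • A) := by simp only [hdiag, hcross]
    _ = (((Fintype.card ι : 𝕜) - 1) / Fintype.card ι) • A := by
        rw [sum_const, card_univ, ← Nat.cast_smul_eq_nsmul 𝕜, smul_smul,
          show A - c • A = (1 - c) • A by rw [sub_smul, one_smul], smul_smul]
        congr 1
        rcases eq_or_ne (Fintype.card ι : 𝕜) 0 with hn | hn
        · simp [c, hn]
        · simp only [c]
          field_simp

end Centered

section ScoreFunction

variable {E O : Type*} [NormedAddCommGroup E] [NormedSpace ℝ E] [Fintype O] {φ : E}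

theorem fderiv_eq_smul_fderiv_log {g : E → ℝ} (hg : DifferentiableAt ℝ g φ) (hgφ : g φ ≠ 0) :
    fderiv ℝ g φ = g φ • fderiv ℝ (fun ψ => Real.log (g ψ)) φ := by
  rw [fderiv.log hg hgφ, smul_inv_smul₀ hgφ]

theorem hasFDerivAt_log_const_div {g : E → ℝ} (hg : DifferentiableAt ℝ g φ) (hgφ : g φ ≠ 0)
    {q : ℝ} (hq : q ≠ 0) :
    HasFDerivAt (fun ψ => Real.log (q / g ψ)) (-fderiv ℝ (fun ψ => Real.log (g ψ)) φ) φ := by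
  have hlog_div : (fun ψ => Real.log (q / g ψ)) =ᶠ[nhds φ] fun ψ => Real.log q - Real.log (g ψ) :=
    (hg.continuousAt.eventually_ne hgφ).mono fun ψ hψ => Real.log_div hq hψ
  exact ((hg.log hgφ).hasFDerivAt.const_sub _).congr_of_eventuallyEq hlog_div

variable {π : E → O → ℝ}

theorem sum_smul_fderiv_log_eq_zero (hπ : ∀ o, DifferentiableAt ℝ (π · o) φ)
    (hπφ : ∀ o, π φ o ≠ 0) (hsum : ∀ ψ, ∑ o, π ψ o = 1) :
    ∑ o, π φ o • fderiv ℝ (fun ψ => Real.log (π ψ o)) φ = 0 := by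
  simp only [← fderiv_eq_smul_fderiv_log (hπ _) (hπφ _)]
  rw [← fderiv_fun_sum fun o _ => hπ o]
  simp [hsum]

theorem hasFDerivAt_sum_mul_add_log_div (hπ : ∀ o, DifferentiableAt ℝ (π · o) φ)
    (hπφ : ∀ o, π φ o ≠ 0) (hsum : ∀ ψ, ∑ o, π ψ o = 1) (r q : O → ℝ) (hq : ∀ o, q o ≠ 0)
    (c : ℝ) :
    HasFDerivAt (fun ψ => ∑ o, π ψ o * (r o + c * Real.log (q o / π ψ o)))
      (∑ o, π φ o • (r o + c * Real.log (q o / π φ o)) •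
        fderiv ℝ (fun ψ => Real.log (π ψ o)) φ) φ := by
  have hscore := sum_smul_fderiv_log_eq_zero hπ hπφ hsum
  have hterm (o : O) : HasFDerivAt (fun ψ => π ψ o * (r o + c * Real.log (q o / π ψ o)))
      (π φ o • (c • -fderiv ℝ (fun ψ => Real.log (π ψ o)) φ) +
        (r o + c * Real.log (q o / π φ o)) • π φ o • fderiv ℝ (fun ψ => Real.log (π ψ o)) φ) φ := by
    rw [← fderiv_eq_smul_fderiv_log (hπ o) (hπφ o)]
    exact (hπ o).hasFDerivAt.mul
      (((hasFDerivAt_log_const_div (hπ o) (hπφ o) (hq o)).const_mul c).const_add (r o))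
  refine (HasFDerivAt.fun_sum fun o _ => hterm o).congr_fderiv ?_
  simp only [sum_add_distrib, smul_neg, smul_comm (π φ _) c, ← smul_sum, sum_neg_distrib, hscore,
    neg_zero, smul_zero, zero_add, smul_comm (π φ _) (_ : ℝ)]

end ScoreFunction

theorem codistill_unbiased_with_effective_lr_general
    {O : Type*} [Fintype O] {d : ℕ}
    (π : EuclideanSpace ℝ (Fin d) → O → ℝ)
    (πθ : O → ℝ)
    (hpos : ∀ φ o, 0 < π φ o)
    (hθpos : ∀ o, 0 < πθ o)
    (hsum : ∀ φ, ∑ o, π φ o = 1)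
    (hdiff : ∀ o, Differentiable ℝ (fun φ => π φ o))
    (r : O → ℝ) (α N : ℝ)
    (G : ℕ) (hG : 1 < G)
    (φ : EuclideanSpace ℝ (Fin d)) :
    ((G : ℝ) / ((G : ℝ) - 1)) •
        ∑ ω : Fin G → O, (∏ k, π φ (ω k)) •
          ((G : ℝ)⁻¹ • ∑ i,
            ((r (ω i) + (α / N) * Real.log (πθ (ω i) / π φ (ω i)))
              - (G : ℝ)⁻¹ * ∑ j, (r (ω j) + (α / N) * Real.log (πθ (ω j) / π φ (ω j)))) •
              fderiv ℝ (fun ψ => Real.log (π ψ (ω i))) φ)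
      = fderiv ℝ
          (fun ψ => ∑ o, π ψ o * (r o + (α / N) * Real.log (πθ o / π ψ o))) φ := by
  have hπ o : DifferentiableAt ℝ (π · o) φ := (hdiff o).differentiableAt
  have hπφ o : π φ o ≠ 0 := (hpos φ o).ne'
  have hcentered := Fintype.sum_prod_smul_centered (ι := Fin G) (hsum φ)
    (fun o => r o + (α / N) * Real.log (πθ o / π φ o))
    (fun o => fderiv ℝ (fun ψ => Real.log (π ψ o)) φ) (sum_smul_fderiv_log_eq_zero hπ hπφ hsum)
  have hG₁ : (1 : ℝ) < G := by exact_mod_cast hG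
  have hscale : (G : ℝ) / (G - 1) * ((G - 1) / G) = 1 := by
    field_simp [show (G : ℝ) - 1 ≠ 0 by linarith]
  rw [Fintype.card_fin] at hcentered
  rw [hcentered, smul_smul, hscale, one_smul,
    (hasFDerivAt_sum_mul_add_log_div hπ hπφ hsum r πθ (fun o => (hθpos o).ne') _).fderiv]

/-- Unbiasedness with effective learning rate: with effective reward
`r̃_φ(o) = r(o) + (α/N) log(π_θ(o)/π_φ(o))` and mean-centered advantages over
`G` i.i.d. on-policy samples, the gradient estimate scaled by `G/(G−1)` equals
the true policy gradient `∇_φ E_{o∼π_φ}[r̃_φ(o)]`. -/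
theorem codistill_unbiased_with_effective_lr
    {O : Type*} [Fintype O] {d : ℕ}
    (π : EuclideanSpace ℝ (Fin d) → O → ℝ)
    (πθ : O → ℝ)
    (hpos : ∀ φ o, 0 < π φ o)
    (hθpos : ∀ o, 0 < πθ o)
    (hsum : ∀ φ, ∑ o, π φ o = 1)
    (hθsum : ∑ o, πθ o = 1)
    (hdiff : ∀ o, Differentiable ℝ (fun φ => π φ o))
    (r : O → ℝ) (α N : ℝ) (hα : 0 < α) (hN : 0 < N)
    (G : ℕ) (hG : 1 < G)
    (φ : EuclideanSpace ℝ (Fin d)) :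
    ((G : ℝ) / ((G : ℝ) - 1)) •
        ∑ ω : Fin G → O, (∏ k, π φ (ω k)) •
          ((G : ℝ)⁻¹ • ∑ i,
            ((r (ω i) + (α / N) * Real.log (πθ (ω i) / π φ (ω i)))
              - (G : ℝ)⁻¹ * ∑ j, (r (ω j) + (α / N) * Real.log (πθ (ω j) / π φ (ω j)))) •
              fderiv ℝ (fun ψ => Real.log (π ψ (ω i))) φ)
      = fderiv ℝ
          (fun ψ => ∑ o, π ψ o * (r o + (α / N) * Real.log (πθ o / π ψ o))) φ :=
  codistill_unbiased_with_effective_lr_general π πθ hpos hθpos hsum hdiff r α N G hG φ
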